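/- arXiv:math/9912013 — 11 statements merged into one kernel-verified Lean document; each statement's English description precedes it below -/
import Mathlib

section
/- Let A be an upper triangular d×d matrix with i-th diagonal entry λ_i, and B a lower triangular matrix with i-th diagonal entry λ_{d+1-i}, where all λ_i are distinct and nonzero. Suppose F is an invertible matrix with F B F^{-1} = A. Then the matrix entries of F satisfy f_{ij} = 0 whenever i + j > d + 1. -/
theorem conj_triangular_shape {K : Type*} [Field K] {d : ℕ}
    (lam : Fin d → K) (hlam : ∀ i, lam i ≠ 0) (hdist : Function.Injective lam)
    (A B F : Matrix (Fin d) (Fin d) K)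
    (hAut : ∀ i j : Fin d, j < i → A i j = 0) (hAdiag : ∀ i, A i i = lam i)
    (hBlt : ∀ i j : Fin d, i < j → B i j = 0) (hBdiag : ∀ i, B i i = lam i.rev)
    (hF : IsUnit F) (hconj : F * B = A * F) :
    ∀ i j : Fin d, d ≤ (i : ℕ) + (j : ℕ) → F i j = 0 := by
  have key : ∀ m : ℕ, ∀ i j : Fin d, d ≤ (i : ℕ) + (j : ℕ) →
      (d - 1 - (i : ℕ)) + (d - 1 - (j : ℕ)) = m → F i j = 0 := by
    intro m
    induction m using Nat.strong_induction_on with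
    | _ m ih =>
      intro i j hij hm
      have hi := i.isLt
      have hj := j.isLt
      have heq := congrFun (congrFun hconj i) j
      simp only [Matrix.mul_apply] at heq
      have hL : ∑ k, F i k * B k j = F i j * B j j := by
        apply Finset.sum_eq_single
        · intro k _ hk
          rcases lt_or_gt_of_ne hk with h | h
          · rw [hBlt k j h, mul_zero]
          · have hk' := k.isLt
            have hjk : (j : ℕ) < (k : ℕ) := h
            rw [ih ((d - 1 - (i : ℕ)) + (d - 1 - (k : ℕ))) (by omega) i k
              (by omega) rfl, zero_mul]
        · intro h; exact absurd (Finset.mem_univ j) h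
      have hR : ∑ k, A i k * F k j = A i i * F i j := by
        apply Finset.sum_eq_single
        · intro k _ hk
          rcases lt_or_gt_of_ne hk with h | h
          · rw [hAut i k h, zero_mul]
          · have hk' := k.isLt
            have hik : (i : ℕ) < (k : ℕ) := h
            rw [ih ((d - 1 - (k : ℕ)) + (d - 1 - (j : ℕ))) (by omega) k j
              (by omega) rfl, mul_zero]
        · intro h; exact absurd (Finset.mem_univ i) h
      rw [hL, hR, hBdiag, hAdiag] at heq
      have hne : lam j.rev ≠ lam i := by
        intro h
        have := hdist h
        have hrev : (j.rev : ℕ) = d - (j : ℕ) - 1 := Fin.val_rev j ▸ (by omega)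
        have : (j.rev : ℕ) = (i : ℕ) := by rw [this]
        omega
      have : F i j * (lam j.rev - lam i) = 0 := by ring_nf; linear_combination heq
      rcases mul_eq_zero.mp this with h | h
      · exact h
      · exact absurd (sub_eq_zero.mp h) hne
  intro i j hij
  exact key _ i j hij rfl
end

section
/- Let A be an upper triangular d×d matrix with distinct nonzero diagonal entries λ₁,...,λ_d, and B a lower triangular matrix with diagonal entries λ_d,...,λ₁, satisfying ABA = BAB. Then (BA)_{ij} = 0 whenever i + j > d + 1. -/
/-- Iterated product `(M - c 0 • 1) * ⋯ * (M - c (n-1) • 1)` (left to right). -/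
def Qm {K : Type*} [Field K] {d : ℕ} (M : Matrix (Fin d) (Fin d) K)
    (c : ℕ → K) : ℕ → Matrix (Fin d) (Fin d) K
  | 0 => 1
  | n+1 => Qm M c n * (M - c n • 1)

lemma Qm_lower_cols {K : Type*} [Field K] {d : ℕ}
    (B : Matrix (Fin d) (Fin d) K) (c : ℕ → K)
    (hBlt : ∀ i j : Fin d, i < j → B i j = 0)
    (hc : ∀ (n : ℕ) (h : n < d), B ⟨d-1-n, by omega⟩ ⟨d-1-n, by omega⟩ = c n) :
    ∀ n, ∀ i j : Fin d, d ≤ (j:ℕ) + n → Qm B c n i j = 0 := by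
  intro n
  induction n with
  | zero =>
    intro i j h
    have := j.isLt; omega
  | succ n ih =>
    intro i j hj
    show (Qm B c n * (B - c n • 1)) i j = 0
    rw [Matrix.mul_apply]
    apply Finset.sum_eq_zero
    intro m _
    by_cases hm : d ≤ (m:ℕ) + n
    · rw [ih i m hm, zero_mul]
    · push_neg at hm
      have hjlt := j.isLt
      have hnd : n < d := by omega
      have hmj : (m:ℕ) ≤ (j:ℕ) := by omega
      rcases eq_or_lt_of_le hmj with heq | hlt
      · have hmjf : m = j := Fin.ext heq
        subst hmjf
        have hm' : (m:ℕ) = d - 1 - n := by omega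
        have hB : B m m = c n := by
          have h2 := hc n hnd
          have : m = (⟨d-1-n, by omega⟩ : Fin d) := Fin.ext hm'
          rw [this]; exact h2
        simp [Matrix.sub_apply, Matrix.smul_apply, Matrix.one_apply, hB]
      · have hmj' : m < j := hlt
        rw [Matrix.sub_apply, hBlt m j hmj', Matrix.smul_apply,
          Matrix.one_apply_ne (Fin.ne_of_lt hmj')]
        simp

lemma Qm_upper {K : Type*} [Field K] {d : ℕ}
    (A : Matrix (Fin d) (Fin d) K) (c : ℕ → K)
    (hAut : ∀ i j : Fin d, j < i → A i j = 0) :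
    ∀ n, ∀ i m : Fin d, m < i → Qm A c n i m = 0 := by
  intro n
  induction n with
  | zero => intro i m h; exact Matrix.one_apply_ne (Fin.ne_of_gt h)
  | succ n ih =>
    intro i m hmi
    show (Qm A c n * (A - c n • 1)) i m = 0
    rw [Matrix.mul_apply]
    apply Finset.sum_eq_zero
    intro k _
    rcases lt_or_ge k i with hk | hk
    · rw [ih i k hk, zero_mul]
    · have hmk : m < k := lt_of_lt_of_le hmi hk
      rw [Matrix.sub_apply, hAut k m hmk, Matrix.smul_apply,
        Matrix.one_apply_ne (Fin.ne_of_gt hmk)]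
      simp

lemma Qm_diag {K : Type*} [Field K] {d : ℕ}
    (A : Matrix (Fin d) (Fin d) K) (c : ℕ → K)
    (hAut : ∀ i j : Fin d, j < i → A i j = 0) :
    ∀ n, ∀ i : Fin d, Qm A c n i i = ∏ m ∈ Finset.range n, (A i i - c m) := by
  intro n
  induction n with
  | zero => intro i; simp [Qm, Matrix.one_apply]
  | succ n ih =>
    intro i
    show (Qm A c n * (A - c n • 1)) i i = _
    rw [Matrix.mul_apply, Finset.prod_range_succ, ← ih i]
    have hs : ∑ k, Qm A c n i k * (A - c n • 1) k i
        = Qm A c n i i * (A - c n • 1) i i := by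
      apply Finset.sum_eq_single i
      · intro k _ hki
        rcases hki.lt_or_gt with hk | hk
        · rw [Qm_upper A c hAut n i k hk, zero_mul]
        · rw [Matrix.sub_apply, hAut k i hk, Matrix.smul_apply,
            Matrix.one_apply_ne (Fin.ne_of_gt hk)]
          simp
      · intro h; exact absurd (Finset.mem_univ i) h
    rw [hs]
    congr 1
    simp [Matrix.sub_apply, Matrix.smul_apply, Matrix.one_apply]

theorem BA_triangular_shape {K : Type*} [Field K] {d : ℕ}
    (lam : Fin d → K) (hlam : ∀ i, lam i ≠ 0) (hdist : Function.Injective lam)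
    (A B : Matrix (Fin d) (Fin d) K) (hA : IsUnit A) (hB : IsUnit B)
    (hAut : ∀ i j : Fin d, j < i → A i j = 0) (hAdiag : ∀ i, A i i = lam i)
    (hBlt : ∀ i j : Fin d, i < j → B i j = 0) (hBdiag : ∀ i, B i i = lam i.rev)
    (hbraid : A * B * A = B * A * B) :
    ∀ i j : Fin d, d ≤ (i : ℕ) + (j : ℕ) → (B * A) i j = 0 := by
  set C := B * A with hC
  have hComm : A * C = C * B := by
    rw [hC, ← mul_assoc, hbraid, mul_assoc]
  set c : ℕ → K := fun n => if h : n < d then lam ⟨n, h⟩ else 0 with hc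
  have hcB : ∀ (n : ℕ) (h : n < d),
      B ⟨d-1-n, by omega⟩ ⟨d-1-n, by omega⟩ = c n := by
    intro n h
    rw [hBdiag, hc]
    simp only [dif_pos h]
    congr 1
    ext
    simp [Fin.rev]
    omega
  -- intertwining
  have hQC : ∀ n, Qm A c n * C = C * Qm B c n := by
    intro n
    induction n with
    | zero => simp [Qm]
    | succ n ih =>
      show Qm A c n * (A - c n • 1) * C = C * (Qm B c n * (B - c n • 1))
      have h1 : (A - c n • 1) * C = C * (B - c n • 1) := by
        rw [sub_mul, mul_sub, hComm, Matrix.smul_mul, Matrix.mul_smul,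
          one_mul, mul_one]
      rw [mul_assoc, h1, ← mul_assoc, ih, mul_assoc]
  intro i j hij
  have hid := i.isLt
  have hjd := j.isLt
  set n : ℕ := d - (j:ℕ) with hn
  have hkey : ∀ i' : Fin d, ∑ m, Qm A c n i' m * C m j = 0 := by
    intro i'
    have h0 : (Qm A c n * C) i' j = (C * Qm B c n) i' j := by rw [hQC n]
    rw [Matrix.mul_apply, Matrix.mul_apply] at h0
    rw [h0]
    apply Finset.sum_eq_zero
    intro m _
    rw [Qm_lower_cols B c hBlt hcB n m j (by omega), mul_zero]
  have main : ∀ t : ℕ, ∀ i' : Fin d, (i':ℕ) + t + 1 = d → n ≤ (i':ℕ) →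
      C i' j = 0 := by
    intro t
    induction t using Nat.strong_induction_on with
    | _ t ih =>
      intro i' hi' hni'
      have h0 := hkey i'
      have hsingle : ∑ m, Qm A c n i' m * C m j = Qm A c n i' i' * C i' j := by
        apply Finset.sum_eq_single i'
        · intro m _ hm
          rcases hm.lt_or_gt with h | h
          · rw [Qm_upper A c hAut n i' m h, zero_mul]
          · have hmd := m.isLt
            have hC0 : C m j = 0 := by
              refine ih (d - 1 - (m:ℕ)) (by
                have : (i':ℕ) < (m:ℕ) := h
                omega) m (by
                have : (i':ℕ) < (m:ℕ) := h
                omega) (by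
                have : (i':ℕ) < (m:ℕ) := h
                omega)
            rw [hC0, mul_zero]
        · intro h; exact absurd (Finset.mem_univ i') h
      rw [hsingle] at h0
      have hdiag : Qm A c n i' i' ≠ 0 := by
        rw [Qm_diag A c hAut n i']
        apply Finset.prod_ne_zero_iff.mpr
        intro m hm
        rw [Finset.mem_range] at hm
        have hmd : m < d := by omega
        rw [hAdiag, hc]
        simp only [dif_pos hmd]
        intro hzero
        have : lam i' = lam ⟨m, hmd⟩ := by
          have := sub_eq_zero.mp hzero
          exact this
        have := hdist this
        have : (i':ℕ) = m := by rw [this]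
        omega
      exact (mul_eq_zero.mp h0).resolve_left hdiag
  exact main (d - 1 - (i:ℕ)) i (by omega) (by omega)
end

section
/- Let A be an upper triangular matrix with eigenvalues λ₁,...,λ_d down the diagonal, and S a skew-diagonal matrix (S_{ij} = 0 unless i + j = d + 1) with S² = c·1 for a nonzero constant c. Set B = S A S^{-1}. Assume (BA)_{ij} = 0 for all i + j > d + 1 and λ_i·(BA)_{i,d+1-i} = c·S_{i,d+1-i} for all i. Then ABA = BAB. -/
theorem skew_diag_braid_criterion {K : Type*} [Field K] {d : ℕ}
    (lam : Fin d → K) (c : K) (hc : c ≠ 0)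
    (A S B : Matrix (Fin d) (Fin d) K)
    (hAut : ∀ i j : Fin d, j < i → A i j = 0) (hAdiag : ∀ i, A i i = lam i)
    (hSskew : ∀ i j : Fin d, (i : ℕ) + (j : ℕ) ≠ d - 1 → S i j = 0)
    (hS2 : S * S = c • (1 : Matrix (Fin d) (Fin d) K))
    (hB : B * S = S * A)
    (hBA : ∀ i j : Fin d, d ≤ (i : ℕ) + (j : ℕ) → (B * A) i j = 0)
    (hskewval : ∀ i : Fin d, lam i * (B * A) i i.rev = c * S i i.rev) :
    A * B * A = B * A * B := by
  set X := S * A with hX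
  have hrev : ∀ i : Fin d, (i.rev : ℕ) = d - 1 - (i : ℕ) := by
    intro i
    have := i.isLt
    simp [Fin.val_rev]
    omega
  -- entry formula for X
  have hXe : ∀ i j : Fin d, X i j = S i i.rev * A i.rev j := by
    intro i j
    rw [hX, Matrix.mul_apply]
    apply Finset.sum_eq_single i.rev
    · intro k _ hk
      have hk' : (i : ℕ) + (k : ℕ) ≠ d - 1 := by
        intro h
        apply hk
        apply Fin.ext
        have := i.isLt
        rw [hrev]
        omega
      rw [hSskew i k hk', zero_mul]
    · intro h
      exact absurd (Finset.mem_univ _) h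
  -- anti-diagonal products of S
  have hs : ∀ i : Fin d, S i i.rev * S i.rev i = c := by
    intro i
    have h := congrFun (congrFun hS2 i) i
    rw [Matrix.mul_apply] at h
    rw [Finset.sum_eq_single i.rev] at h
    · simpa using h
    · intro k _ hk
      have hk' : (i : ℕ) + (k : ℕ) ≠ d - 1 := by
        intro h'
        apply hk
        apply Fin.ext
        have := i.isLt
        rw [hrev]
        omega
      rw [hSskew i k hk', zero_mul]
    · intro h
      exact absurd (Finset.mem_univ _) h
  -- Y = X*X = c • (B*A)
  have hY : X * X = c • (B * A) := by
    calc X * X = (B * S) * (S * A) := by rw [hB]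
    _ = B * ((S * S) * A) := by rw [Matrix.mul_assoc, Matrix.mul_assoc]
    _ = B * ((c • (1 : Matrix (Fin d) (Fin d) K)) * A) := by rw [hS2]
    _ = c • (B * A) := by rw [Matrix.smul_mul, one_mul, Matrix.mul_smul]
  have hYsupp : ∀ i j : Fin d, d ≤ (i : ℕ) + (j : ℕ) → (X * X) i j = 0 := by
    intro i j hij
    rw [hY, Matrix.smul_apply, hBA i j hij, smul_zero]
  have hYanti : ∀ i : Fin d, lam i * (X * X) i i.rev = c * (c * S i i.rev) := by
    intro i
    rw [hY, Matrix.smul_apply, smul_eq_mul]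
    rw [mul_left_comm, hskewval i]
  -- X^3 = c^3 • 1
  have hX3 : X * X * X = (c ^ 3) • (1 : Matrix (Fin d) (Fin d) K) := by
    ext i j
    rw [Matrix.smul_apply, Matrix.one_apply]
    rcases lt_trichotomy (i : ℕ) (j : ℕ) with hlt | heq | hgt
    · -- i < j : use X * (X*X)
      rw [Matrix.mul_assoc, Matrix.mul_apply]
      rw [if_neg (by intro h; subst h; omega), smul_zero]
      apply Finset.sum_eq_zero
      intro k _
      by_cases hk : d ≤ (k : ℕ) + (j : ℕ)
      · rw [hYsupp k j hk, mul_zero]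
      · have hA0 : A i.rev k = 0 := by
          apply hAut
          rw [Fin.lt_def, hrev]
          have := j.isLt
          omega
        rw [hXe, hA0, mul_zero, zero_mul]
    · -- i = j : single term k = i.rev
      have hij : i = j := Fin.ext heq
      subst hij
      rw [if_pos rfl, smul_eq_mul, mul_one, Matrix.mul_apply]
      rw [Finset.sum_eq_single i.rev]
      · rw [hXe, Fin.rev_rev, hAdiag]
        have h1 := hYanti i
        have h2 := hs i
        calc (X * X) i i.rev * (S i.rev i * lam i)
            = (lam i * (X * X) i i.rev) * S i.rev i := by ring
          _ = (c * (c * S i i.rev)) * S i.rev i := by rw [h1]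
          _ = c * c * (S i i.rev * S i.rev i) := by ring
          _ = c ^ 3 := by rw [h2]; ring
      · intro k _ hk
        by_cases hd : d ≤ (i : ℕ) + (k : ℕ)
        · rw [hYsupp i k hd, zero_mul]
        · have hA0 : A k.rev i = 0 := by
            apply hAut
            rw [Fin.lt_def, hrev]
            have hki : (k : ℕ) ≠ (i.rev : ℕ) := fun h => hk (Fin.ext (by rw [← h]))
            rw [hrev] at hki
            have := i.isLt
            have := k.isLt
            omega
          rw [hXe, hA0, mul_zero, mul_zero]
      · intro h
        exact absurd (Finset.mem_univ _) h
    · -- i > j : (X*X) * X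
      rw [Matrix.mul_apply]
      rw [if_neg (by intro h; subst h; omega), smul_zero]
      apply Finset.sum_eq_zero
      intro k _
      by_cases hd : d ≤ (i : ℕ) + (k : ℕ)
      · rw [hYsupp i k hd, zero_mul]
      · have hA0 : A k.rev j = 0 := by
          apply hAut
          rw [Fin.lt_def, hrev]
          have := i.isLt
          have := k.isLt
          omega
        rw [hXe, hA0, mul_zero, mul_zero]
  -- assemble
  set T : Matrix (Fin d) (Fin d) K := c⁻¹ • S with hT
  have hST : S * T = 1 := by
    rw [hT, Matrix.mul_smul, hS2, smul_smul, inv_mul_cancel₀ hc, one_smul]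
  have hTS : T * S = 1 := by
    rw [hT, Matrix.smul_mul, hS2, smul_smul, inv_mul_cancel₀ hc, one_smul]
  have hA2 : A = T * X := by
    rw [hX, ← Matrix.mul_assoc, hTS, one_mul]
  have hB2 : B = X * T := by
    calc B = B * (S * T) := by rw [hST, mul_one]
    _ = (B * S) * T := by rw [Matrix.mul_assoc]
    _ = X * T := by rw [hB, hX]
  have hTTM : ∀ M : Matrix (Fin d) (Fin d) K, T * (T * M) = c⁻¹ • M := by
    intro M
    rw [← Matrix.mul_assoc]
    have hTT : T * T = c⁻¹ • (1 : Matrix (Fin d) (Fin d) K) := by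
      rw [hT, Matrix.smul_mul, Matrix.mul_smul, hS2, smul_smul, smul_smul]
      congr 1
      field_simp
    rw [hTT, Matrix.smul_mul, one_mul]
  have hX3' : X * (X * X) = (c ^ 3) • (1 : Matrix (Fin d) (Fin d) K) := by
    rw [← Matrix.mul_assoc]; exact hX3
  rw [hA2, hB2]
  simp only [Matrix.mul_assoc]
  rw [hTTM, hTTM]
  simp only [Matrix.mul_smul, Matrix.smul_mul]
  congr 1
  rw [hX3', Matrix.mul_smul, mul_one]
  rw [← Matrix.mul_assoc, ← Matrix.mul_assoc, hX3, Matrix.smul_mul, one_mul]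
end

section
/- Let λ₁, λ₂ be nonzero scalars with λ₁² − λ₁λ₂ + λ₂² ≠ 0, and let A = [[λ₁, λ₁], [0, λ₂]], B = [[λ₂, 0], [−λ₂, λ₁]]. Then the subalgebra generated by A and B is the full 2×2 matrix algebra; equivalently, the representation of B₃ defined by σ₁ ↦ A, σ₂ ↦ B is irreducible. -/
/-!
A nonzero `v ∈ W` spans `K²` together with `A v` or `B v` unless it is a common eigenvector
of `A` and `B`. For `v = (x, y)` the two eigenvector conditions read
`y ((λ₂ - λ₁) x - λ₁ y) = 0` and `x ((λ₁ - λ₂) y - λ₂ x) = 0`; since `λ₁, λ₂ ≠ 0` neither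
coordinate can vanish, and eliminating `y` from the two linear factors leaves
`(λ₁² - λ₁λ₂ + λ₂²) x = 0`.
-/

open Matrix

theorem Submodule.eq_top_of_row_mem_of_isUnit_det {R n : Type*} [CommRing R] [Fintype n]
    [DecidableEq n] {W : Submodule R (n → R)} (M : Matrix n n R) (hM : IsUnit M.det)
    (hW : ∀ i, M i ∈ W) : W = ⊤ := by
  refine eq_top_iff.2 fun z _ => ?_
  obtain ⟨c, rfl⟩ := vecMul_surjective_iff_isUnit.2 ((isUnit_iff_isUnit_det M).2 hM) z
  show c ᵥ* M ∈ W
  rw [vecMul_eq_sum]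
  exact W.sum_mem fun i _ => W.smul_mem _ (hW i)

theorem det_vec_mulVec_braid_ne_zero {K : Type*} [Field K] {l1 l2 : K} (h1 : l1 ≠ 0)
    (h2 : l2 ≠ 0) (hQ : l1 ^ 2 - l1 * l2 + l2 ^ 2 ≠ 0) {v : Fin 2 → K} (hv : v ≠ 0) :
    (of ![v, !![l1, l1; 0, l2] *ᵥ v]).det ≠ 0 ∨ (of ![v, !![l2, 0; -l2, l1] *ᵥ v]).det ≠ 0 := by
  simp only [det_fin_two, of_apply, cons_val_zero, cons_val_one, mulVec, dotProduct,
    Fin.sum_univ_two]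
  set x := v 0
  set y := v 1
  have hxy : ¬(x = 0 ∧ y = 0) := fun ⟨hx, hy⟩ => hv (funext (Fin.forall_fin_two.2 ⟨hx, hy⟩))
  by_contra! ⟨hA, hB⟩
  have hx : x ≠ 0 := fun hx => by
    have : l1 * y ^ 2 = 0 := by linear_combination -hA + (l2 - l1) * y * hx
    exact hxy ⟨hx, by simpa [h1] using this⟩
  have hy : y ≠ 0 := fun hy => by
    have : l2 * x ^ 2 = 0 := by linear_combination -hB + (l1 - l2) * x * hy
    exact hxy ⟨by simpa [h2] using this, hy⟩
  have : (l1 ^ 2 - l1 * l2 + l2 ^ 2) * (x ^ 2 * y) = 0 := by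
    linear_combination -(l1 - l2) * x * hA - l1 * y * hB
  simp [hQ, hx, hy] at this

theorem braid_dim2_irreducible_general {K : Type*} [Field K]
    (l1 l2 : K) (h1 : l1 ≠ 0) (h2 : l2 ≠ 0) (hQ : l1 ^ 2 - l1 * l2 + l2 ^ 2 ≠ 0) :
    let A : Matrix (Fin 2) (Fin 2) K := !![l1, l1; 0, l2]
    let B : Matrix (Fin 2) (Fin 2) K := !![l2, 0; -l2, l1]
    ∀ W : Submodule K (Fin 2 → K),
      (∀ v ∈ W, A.mulVec v ∈ W) → (∀ v ∈ W, B.mulVec v ∈ W) → W = ⊥ ∨ W = ⊤ := by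
  intro A B W hA hB
  refine or_iff_not_imp_left.2 fun hW => ?_
  obtain ⟨v, hvW, hv0⟩ := (Submodule.ne_bot_iff W).1 hW
  rcases det_vec_mulVec_braid_ne_zero h1 h2 hQ hv0 with hdet | hdet
  · exact Submodule.eq_top_of_row_mem_of_isUnit_det _ hdet.isUnit
      (Fin.forall_fin_two.2 ⟨hvW, hA v hvW⟩)
  · exact Submodule.eq_top_of_row_mem_of_isUnit_det _ hdet.isUnit
      (Fin.forall_fin_two.2 ⟨hvW, hB v hvW⟩)

theorem braid_dim2_irreducible {K : Type*} [Field K] [IsAlgClosed K]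
    (l1 l2 : K) (h1 : l1 ≠ 0) (h2 : l2 ≠ 0) (hQ : l1 ^ 2 - l1 * l2 + l2 ^ 2 ≠ 0) :
    let A : Matrix (Fin 2) (Fin 2) K := !![l1, l1; 0, l2]
    let B : Matrix (Fin 2) (Fin 2) K := !![l2, 0; -l2, l1]
    ∀ W : Submodule K (Fin 2 → K),
      (∀ v ∈ W, A.mulVec v ∈ W) → (∀ v ∈ W, B.mulVec v ∈ W) → W = ⊥ ∨ W = ⊤ :=
  braid_dim2_irreducible_general l1 l2 h1 h2 hQ
end

section
/- Let λ₁, λ₂ be nonzero scalars with λ₁² − λ₁λ₂ + λ₂² = 0, and A = [[λ₁, λ₁], [0, λ₂]], B = [[λ₂, 0], [−λ₂, λ₁]]. Then there exists a common eigenvector of A and B, i.e., the representation is reducible. -/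
theorem braid_dim2_reducible {K : Type*} [Field K]
    (l1 l2 : K) (h1 : l1 ≠ 0) (h2 : l2 ≠ 0) (hQ : l1 ^ 2 - l1 * l2 + l2 ^ 2 = 0) :
    let A : Matrix (Fin 2) (Fin 2) K := !![l1, l1; 0, l2]
    let B : Matrix (Fin 2) (Fin 2) K := !![l2, 0; -l2, l1]
    ∃ v : Fin 2 → K, v ≠ 0 ∧ ∃ a b : K, A.mulVec v = a • v ∧ B.mulVec v = b • v := by
  intro A B
  refine ⟨![l1, l2 - l1], ?_, l2, l2, ?_, ?_⟩
  · intro h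
    have := congrFun h 0
    simp at this
    exact h1 this
  · funext i
    fin_cases i <;>
      simp [A, Matrix.mulVec, dotProduct] <;> ring
  · funext i
    fin_cases i <;>
      simp [B, Matrix.mulVec, dotProduct] <;> linear_combination -hQ
end

section
/- Let λ₁, λ₂, λ₃ be nonzero scalars and define the 3×3 matrices A = [[λ₁, λ₁λ₃λ₂^{-1}+λ₂, λ₂], [0, λ₂, λ₂], [0, 0, λ₃]] and B = [[λ₃, 0, 0], [−λ₂, λ₂, 0], [λ₂, −λ₁λ₃λ₂^{-1}−λ₂, λ₁]]. Then ABA = BAB. -/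
/-!
Write `c` for `λ₁λ₃λ₂⁻¹`. Over any commutative ring, `ABA - BAB` is `(cλ₂ - λ₁λ₃)` times an
explicit matrix, so the braid relation follows from `cλ₂ = λ₁λ₃` alone.
-/

namespace BraidDim3

variable {R : Type*} [CommRing R]

def braidA (l1 l2 l3 c : R) : Matrix (Fin 3) (Fin 3) R :=
  !![l1, c + l2, l2; 0, l2, l2; 0, 0, l3]

def braidB (l1 l2 l3 c : R) : Matrix (Fin 3) (Fin 3) R :=
  !![l3, 0, 0; -l2, l2, 0; l2, -c - l2, l1]

theorem braidA_mul_braidB_mul_braidA_sub (l1 l2 l3 c : R) :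
    braidA l1 l2 l3 c * braidB l1 l2 l3 c * braidA l1 l2 l3 c -
        braidB l1 l2 l3 c * braidA l1 l2 l3 c * braidB l1 l2 l3 c =
      (c * l2 - l1 * l3) • !![l3 - l1, -(c + l2), -l2; -l2, 0, -l2; l2, -(c + l2), l1 - l3] := by
  ext i j
  fin_cases i <;> fin_cases j <;> simp [braidA, braidB] <;> ring

theorem braidA_mul_braidB_mul_braidA_of_mul_eq {l1 l2 l3 c : R} (hc : c * l2 = l1 * l3) :
    braidA l1 l2 l3 c * braidB l1 l2 l3 c * braidA l1 l2 l3 c =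
      braidB l1 l2 l3 c * braidA l1 l2 l3 c * braidB l1 l2 l3 c := by
  rw [← sub_eq_zero, braidA_mul_braidB_mul_braidA_sub, hc, sub_self, zero_smul]

end BraidDim3

theorem braid_dim3_general {K : Type*} [Field K] (l1 l2 l3 : K)
    (h2 : l2 ≠ 0) :
    let A : Matrix (Fin 3) (Fin 3) K :=
      !![l1, l1 * l3 * l2⁻¹ + l2, l2; 0, l2, l2; 0, 0, l3]
    let B : Matrix (Fin 3) (Fin 3) K :=
      !![l3, 0, 0; -l2, l2, 0; l2, -(l1 * l3 * l2⁻¹) - l2, l1]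
    A * B * A = B * A * B :=
  BraidDim3.braidA_mul_braidB_mul_braidA_of_mul_eq (inv_mul_cancel_right₀ h2 (l1 * l3))

theorem braid_dim3 {K : Type*} [Field K] (l1 l2 l3 : K)
    (h1 : l1 ≠ 0) (h2 : l2 ≠ 0) (h3 : l3 ≠ 0) :
    let A : Matrix (Fin 3) (Fin 3) K :=
      !![l1, l1 * l3 * l2⁻¹ + l2, l2; 0, l2, l2; 0, 0, l3]
    let B : Matrix (Fin 3) (Fin 3) K :=
      !![l3, 0, 0; -l2, l2, 0; l2, -(l1 * l3 * l2⁻¹) - l2, l1]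
    A * B * A = B * A * B :=
  braid_dim3_general l1 l2 l3 h2
end

section
/- For the 3×3 braid matrices A, B of the previous form, the representation σ₁ ↦ A, σ₂ ↦ B of B₃ is irreducible if and only if (λ_r² + λ_s λ_k) ≠ 0 for all permutations {r, s, k} of {1, 2, 3}. -/
set_option maxHeartbeats 1000000

private lemma mulVec3 {K : Type*} [Field K] (a b c d e f g h i x y z : K) :
    (!![a,b,c;d,e,f;g,h,i]).mulVec ![x,y,z] =
      ![a*x+b*y+c*z, d*x+e*y+f*z, g*x+h*y+i*z] := by
  funext j
  fin_cases j <;>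
    simp [Matrix.mulVec, dotProduct, Fin.sum_univ_three]

private lemma smul3 {K : Type*} [Field K] (a p q r : K) :
    a • (![p,q,r] : Fin 3 → K) = ![a*p, a*q, a*r] := by
  funext i; fin_cases i <;> simp

private lemma add3 {K : Type*} [Field K] (p q r s t u : K) :
    (![p,q,r] : Fin 3 → K) + ![s,t,u] = ![p+s, q+t, r+u] := by
  funext i; fin_cases i <;> simp

private lemma vec3_ext {K : Type*} [Field K] {a b c a' b' c' : K}
    (h0 : a = a') (h1 : b = b') (h2 : c = c') :
    (![a,b,c] : Fin 3 → K) = ![a',b',c'] := by rw [h0, h1, h2]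

private lemma mem_of_smul_mem {K : Type*} [Field K] {W : Submodule K (Fin 3 → K)}
    {a : K} {w : Fin 3 → K} (ha : a ≠ 0) (h : a • w ∈ W) : w ∈ W := by
  have := W.smul_mem a⁻¹ h
  rwa [smul_smul, inv_mul_cancel₀ ha, one_smul] at this

private def lin3 {K : Type*} [Field K] (a b c : K) : (Fin 3 → K) →ₗ[K] K where
  toFun v := a * v 0 + b * v 1 + c * v 2
  map_add' u v := by simp; ring
  map_smul' m v := by simp [smul_eq_mul]; ring

section aux

variable {K : Type*} [Field K] {l1 l2 l3 : K}

private lemma spanE2_case (h2 : l2 ≠ 0) (hc : l2^2 + l1*l3 = 0)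
    (hirr : ∀ W : Submodule K (Fin 3 → K),
      (∀ v ∈ W, (!![l1, l1 * l3 * l2⁻¹ + l2, l2; 0, l2, l2; 0, 0, l3]).mulVec v ∈ W) →
      (∀ v ∈ W, (!![l3, 0, 0; -l2, l2, 0; l2, -(l1 * l3 * l2⁻¹) - l2, l1]).mulVec v ∈ W) →
      W = ⊥ ∨ W = ⊤) : False := by
  have hinv : l2 * l2⁻¹ = 1 := mul_inv_cancel₀ h2
  have hcc : l1 * l3 * l2⁻¹ + l2 = 0 := by
    linear_combination l2⁻¹ * hc + (-l2) * hinv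
  have hAe2 : (!![l1, l1 * l3 * l2⁻¹ + l2, l2; 0, l2, l2; 0, 0, l3]).mulVec ![(0:K),1,0]
      = l2 • ![(0:K),1,0] := by
    simp only [mulVec3, smul3]
    exact vec3_ext (by linear_combination hcc) (by ring) (by ring)
  have hBe2 : (!![l3, 0, 0; -l2, l2, 0; l2, -(l1 * l3 * l2⁻¹) - l2, l1]).mulVec ![(0:K),1,0]
      = l2 • ![(0:K),1,0] := by
    simp only [mulVec3, smul3]
    exact vec3_ext (by ring) (by ring) (by linear_combination -hcc)
  have inv1 : ∀ v ∈ Submodule.span K {![(0:K),1,0]},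
      (!![l1, l1 * l3 * l2⁻¹ + l2, l2; 0, l2, l2; 0, 0, l3]).mulVec v ∈
        Submodule.span K {![(0:K),1,0]} := by
    intro v hv
    obtain ⟨a, rfl⟩ := Submodule.mem_span_singleton.mp hv
    rw [Matrix.mulVec_smul, hAe2]
    exact Submodule.smul_mem _ _ (Submodule.smul_mem _ _ (Submodule.mem_span_singleton_self _))
  have inv2 : ∀ v ∈ Submodule.span K {![(0:K),1,0]},
      (!![l3, 0, 0; -l2, l2, 0; l2, -(l1 * l3 * l2⁻¹) - l2, l1]).mulVec v ∈
        Submodule.span K {![(0:K),1,0]} := by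
    intro v hv
    obtain ⟨a, rfl⟩ := Submodule.mem_span_singleton.mp hv
    rw [Matrix.mulVec_smul, hBe2]
    exact Submodule.smul_mem _ _ (Submodule.smul_mem _ _ (Submodule.mem_span_singleton_self _))
  rcases hirr _ inv1 inv2 with h | h
  · rw [Submodule.span_singleton_eq_bot] at h
    have := congrFun h 1
    simp at this
  · have h1 : ![(1:K),0,0] ∈ Submodule.span K {![(0:K),1,0]} := h ▸ Submodule.mem_top
    obtain ⟨a, ha⟩ := Submodule.mem_span_singleton.mp h1
    have := congrFun ha 0
    simp at this

private lemma kerf_case (h2 : l2 ≠ 0) (hC : l1^2 + l2*l3 = 0) (hc : l2^2 + l1*l3 ≠ 0)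
    (hirr : ∀ W : Submodule K (Fin 3 → K),
      (∀ v ∈ W, (!![l1, l1 * l3 * l2⁻¹ + l2, l2; 0, l2, l2; 0, 0, l3]).mulVec v ∈ W) →
      (∀ v ∈ W, (!![l3, 0, 0; -l2, l2, 0; l2, -(l1 * l3 * l2⁻¹) - l2, l1]).mulVec v ∈ W) →
      W = ⊥ ∨ W = ⊤) : False := by
  have hinv : l2 * l2⁻¹ = 1 := mul_inv_cancel₀ h2
  set f : (Fin 3 → K) →ₗ[K] K := lin3 (l1-l2) (l1*l3*l2⁻¹+l2) (l2-l1) with hf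
  have hfapply : ∀ u : Fin 3 → K,
      f u = (l1-l2) * u 0 + (l1*l3*l2⁻¹+l2) * u 1 + (l2-l1) * u 2 := fun u => rfl
  have idA : ∀ x y z : K,
      f ((!![l1, l1 * l3 * l2⁻¹ + l2, l2; 0, l2, l2; 0, 0, l3]).mulVec ![x,y,z])
        = l1 * f ![x,y,z] + z * (l1^2 + l2*l3) := by
    intro x y z
    simp only [mulVec3, hfapply, Matrix.cons_val_zero, Matrix.cons_val_one,
      Matrix.cons_val_two, Matrix.head_cons, Matrix.tail_cons]
    linear_combination (l1*l3*z) * hinv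
  have idB : ∀ x y z : K,
      f ((!![l3, 0, 0; -l2, l2, 0; l2, -(l1 * l3 * l2⁻¹) - l2, l1]).mulVec ![x,y,z])
        = l1 * f ![x,y,z] - x * (l1^2 + l2*l3) := by
    intro x y z
    simp only [mulVec3, hfapply, Matrix.cons_val_zero, Matrix.cons_val_one,
      Matrix.cons_val_two, Matrix.head_cons, Matrix.tail_cons]
    linear_combination (-(l1*l3*x)) * hinv
  have inv1 : ∀ v ∈ LinearMap.ker f,
      (!![l1, l1 * l3 * l2⁻¹ + l2, l2; 0, l2, l2; 0, 0, l3]).mulVec v ∈ LinearMap.ker f := by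
    intro v hv
    rw [LinearMap.mem_ker] at hv ⊢
    have hrep : v = ![v 0, v 1, v 2] := by funext i; fin_cases i <;> rfl
    rw [hrep] at hv ⊢
    rw [idA, hv, hC]
    ring
  have inv2 : ∀ v ∈ LinearMap.ker f,
      (!![l3, 0, 0; -l2, l2, 0; l2, -(l1 * l3 * l2⁻¹) - l2, l1]).mulVec v ∈ LinearMap.ker f := by
    intro v hv
    rw [LinearMap.mem_ker] at hv ⊢
    have hrep : v = ![v 0, v 1, v 2] := by funext i; fin_cases i <;> rfl
    rw [hrep] at hv ⊢
    rw [idB, hv, hC]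
    ring
  rcases hirr _ inv1 inv2 with h | h
  · have hm : ![(1:K),0,1] ∈ LinearMap.ker f := by
      rw [LinearMap.mem_ker, hfapply]
      simp only [Matrix.cons_val_zero, Matrix.cons_val_one, Matrix.cons_val_two,
        Matrix.head_cons, Matrix.tail_cons]
      ring
    rw [h, Submodule.mem_bot] at hm
    have := congrFun hm 0
    simp at this
  · have hm : ![(0:K),1,0] ∈ LinearMap.ker f := h ▸ Submodule.mem_top
    rw [LinearMap.mem_ker, hfapply] at hm
    simp only [Matrix.cons_val_zero, Matrix.cons_val_one, Matrix.cons_val_two,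
      Matrix.head_cons, Matrix.tail_cons] at hm
    have hcc0 : l1 * l3 * l2⁻¹ + l2 = 0 := by linear_combination hm
    exact hc (by linear_combination l2 * hcc0 + (-(l1*l3)) * hinv)

private lemma spanv_case (h2 : l2 ≠ 0) (hC : l3^2 + l1*l2 = 0)
    (hirr : ∀ W : Submodule K (Fin 3 → K),
      (∀ v ∈ W, (!![l1, l1 * l3 * l2⁻¹ + l2, l2; 0, l2, l2; 0, 0, l3]).mulVec v ∈ W) →
      (∀ v ∈ W, (!![l3, 0, 0; -l2, l2, 0; l2, -(l1 * l3 * l2⁻¹) - l2, l1]).mulVec v ∈ W) →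
      W = ⊥ ∨ W = ⊤) : False := by
  have hinv : l2 * l2⁻¹ = 1 := mul_inv_cancel₀ h2
  have hAv : (!![l1, l1 * l3 * l2⁻¹ + l2, l2; 0, l2, l2; 0, 0, l3]).mulVec ![l2-l3, l2, l3-l2]
      = l3 • ![l2-l3, l2, l3-l2] := by
    simp only [mulVec3, smul3]
    exact vec3_ext (by linear_combination hC + (l1*l3) * hinv) (by ring) (by ring)
  have hBv : (!![l3, 0, 0; -l2, l2, 0; l2, -(l1 * l3 * l2⁻¹) - l2, l1]).mulVec ![l2-l3, l2, l3-l2]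
      = l3 • ![l2-l3, l2, l3-l2] := by
    simp only [mulVec3, smul3]
    exact vec3_ext (by ring) (by ring) (by linear_combination -hC + (-(l1*l3)) * hinv)
  have inv1 : ∀ u ∈ Submodule.span K {(![l2-l3, l2, l3-l2] : Fin 3 → K)},
      (!![l1, l1 * l3 * l2⁻¹ + l2, l2; 0, l2, l2; 0, 0, l3]).mulVec u ∈
        Submodule.span K {(![l2-l3, l2, l3-l2] : Fin 3 → K)} := by
    intro u hu
    obtain ⟨a, rfl⟩ := Submodule.mem_span_singleton.mp hu
    rw [Matrix.mulVec_smul, hAv]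
    exact Submodule.smul_mem _ _ (Submodule.smul_mem _ _ (Submodule.mem_span_singleton_self _))
  have inv2 : ∀ u ∈ Submodule.span K {(![l2-l3, l2, l3-l2] : Fin 3 → K)},
      (!![l3, 0, 0; -l2, l2, 0; l2, -(l1 * l3 * l2⁻¹) - l2, l1]).mulVec u ∈
        Submodule.span K {(![l2-l3, l2, l3-l2] : Fin 3 → K)} := by
    intro u hu
    obtain ⟨a, rfl⟩ := Submodule.mem_span_singleton.mp hu
    rw [Matrix.mulVec_smul, hBv]
    exact Submodule.smul_mem _ _ (Submodule.smul_mem _ _ (Submodule.mem_span_singleton_self _))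
  rcases hirr _ inv1 inv2 with h | h
  · rw [Submodule.span_singleton_eq_bot] at h
    have := congrFun h 1
    simp at this
    exact h2 this
  · have h1 : ![(1:K),0,0] ∈ Submodule.span K {(![l2-l3, l2, l3-l2] : Fin 3 → K)} :=
      h ▸ Submodule.mem_top
    obtain ⟨a, ha⟩ := Submodule.mem_span_singleton.mp h1
    have h10 := congrFun ha 0
    have h11 := congrFun ha 1
    simp at h10 h11
    rcases h11 with h11 | h11
    · rw [h11] at h10; simp at h10
    · exact h2 h11

private lemma braid_irred (h1 : l1 ≠ 0) (h2 : l2 ≠ 0) (h3 : l3 ≠ 0)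
    (hC1 : l1^2 + l2*l3 ≠ 0) (hC2 : l2^2 + l1*l3 ≠ 0) (hC3 : l3^2 + l1*l2 ≠ 0)
    (W : Submodule K (Fin 3 → K))
    (hAW : ∀ v ∈ W, (!![l1, l1 * l3 * l2⁻¹ + l2, l2; 0, l2, l2; 0, 0, l3]).mulVec v ∈ W)
    (hBW : ∀ v ∈ W, (!![l3, 0, 0; -l2, l2, 0; l2, -(l1 * l3 * l2⁻¹) - l2, l1]).mulVec v ∈ W) :
    W = ⊥ ∨ W = ⊤ := by
  by_cases hbot : W = ⊥
  · exact Or.inl hbot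
  right
  have hinv : l2 * l2⁻¹ = 1 := mul_inv_cancel₀ h2
  have hcc : l1 * l3 * l2⁻¹ + l2 ≠ 0 := by
    intro h
    exact hC2 (by linear_combination l2 * h + (-(l1*l3)) * hinv)
  have htop : ![(1:K),0,0] ∈ W → ![(0:K),1,0] ∈ W → ![(0:K),0,1] ∈ W → W = ⊤ := by
    intro m1 m2 m3
    rw [Submodule.eq_top_iff']
    intro u
    have hu : u = u 0 • ![(1:K),0,0] + u 1 • ![(0:K),1,0] + u 2 • ![(0:K),0,1] := by
      funext i; fin_cases i <;> simp
    rw [hu]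
    exact W.add_mem (W.add_mem (W.smul_mem _ m1) (W.smul_mem _ m2)) (W.smul_mem _ m3)
  have step_e1_e3 : ![(1:K),0,0] ∈ W → ![(0:K),0,1] ∈ W := by
    intro h
    have m2 : (!![l3, 0, 0; -l2, l2, 0; l2, -(l1 * l3 * l2⁻¹) - l2, l1]).mulVec ![(1:K),0,0]
        + (-l3) • ![(1:K),0,0] ∈ W := W.add_mem (hBW _ h) (W.smul_mem _ h)
    rw [show (!![l3, 0, 0; -l2, l2, 0; l2, -(l1 * l3 * l2⁻¹) - l2, l1]).mulVec ![(1:K),0,0]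
        + (-l3) • ![(1:K),0,0] = ![0, -l2, l2] by
      simp only [mulVec3, smul3, add3]
      exact vec3_ext (by ring) (by ring) (by ring)] at m2
    have m3 := hAW _ m2
    rw [show (!![l1, l1 * l3 * l2⁻¹ + l2, l2; 0, l2, l2; 0, 0, l3]).mulVec ![(0:K), -l2, l2]
        = ![-(l1*l3), 0, l2*l3] by
      simp only [mulVec3]
      exact vec3_ext (by linear_combination (-(l1*l3)) * hinv) (by ring) (by ring)] at m3
    have m4 : (![-(l1*l3), 0, l2*l3] : Fin 3 → K) + (l1*l3) • ![(1:K),0,0] ∈ W :=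
      W.add_mem m3 (W.smul_mem _ h)
    rw [show (![-(l1*l3), 0, l2*l3] : Fin 3 → K) + (l1*l3) • ![(1:K),0,0]
        = (l2*l3) • ![(0:K),0,1] by
      simp only [smul3, add3]
      exact vec3_ext (by ring) (by ring) (by ring)] at m4
    exact mem_of_smul_mem (mul_ne_zero h2 h3) m4
  have step_e1_e2 : ![(1:K),0,0] ∈ W → ![(0:K),0,1] ∈ W → ![(0:K),1,0] ∈ W := by
    intro h h3m
    have m2 : (!![l3, 0, 0; -l2, l2, 0; l2, -(l1 * l3 * l2⁻¹) - l2, l1]).mulVec ![(1:K),0,0]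
        + (-l3) • ![(1:K),0,0] + (-l2) • ![(0:K),0,1] ∈ W :=
      W.add_mem (W.add_mem (hBW _ h) (W.smul_mem _ h)) (W.smul_mem _ h3m)
    rw [show (!![l3, 0, 0; -l2, l2, 0; l2, -(l1 * l3 * l2⁻¹) - l2, l1]).mulVec ![(1:K),0,0]
        + (-l3) • ![(1:K),0,0] + (-l2) • ![(0:K),0,1] = (-l2) • ![(0:K),1,0] by
      simp only [mulVec3, smul3, add3]
      exact vec3_ext (by ring) (by ring) (by ring)] at m2
    exact mem_of_smul_mem (neg_ne_zero.mpr h2) m2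
  have step_e3_e1 : ![(0:K),0,1] ∈ W → ![(1:K),0,0] ∈ W := by
    intro h
    have m2 : (!![l1, l1 * l3 * l2⁻¹ + l2, l2; 0, l2, l2; 0, 0, l3]).mulVec ![(0:K),0,1]
        + (-l3) • ![(0:K),0,1] ∈ W := W.add_mem (hAW _ h) (W.smul_mem _ h)
    rw [show (!![l1, l1 * l3 * l2⁻¹ + l2, l2; 0, l2, l2; 0, 0, l3]).mulVec ![(0:K),0,1]
        + (-l3) • ![(0:K),0,1] = ![l2, l2, 0] by
      simp only [mulVec3, smul3, add3]
      exact vec3_ext (by ring) (by ring) (by ring)] at m2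
    have m3 := hBW _ m2
    rw [show (!![l3, 0, 0; -l2, l2, 0; l2, -(l1 * l3 * l2⁻¹) - l2, l1]).mulVec ![l2, l2, (0:K)]
        = ![l2*l3, 0, -(l1*l3)] by
      simp only [mulVec3]
      exact vec3_ext (by ring) (by ring) (by linear_combination (-(l1*l3)) * hinv)] at m3
    have m4 : (![l2*l3, 0, -(l1*l3)] : Fin 3 → K) + (l1*l3) • ![(0:K),0,1] ∈ W :=
      W.add_mem m3 (W.smul_mem _ h)
    rw [show (![l2*l3, 0, -(l1*l3)] : Fin 3 → K) + (l1*l3) • ![(0:K),0,1]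
        = (l2*l3) • ![(1:K),0,0] by
      simp only [smul3, add3]
      exact vec3_ext (by ring) (by ring) (by ring)] at m4
    exact mem_of_smul_mem (mul_ne_zero h2 h3) m4
  have step_e2_e3 : ![(0:K),1,0] ∈ W → ![(0:K),0,1] ∈ W := by
    intro h
    have m2 : (!![l3, 0, 0; -l2, l2, 0; l2, -(l1 * l3 * l2⁻¹) - l2, l1]).mulVec ![(0:K),1,0]
        + (-l2) • ![(0:K),1,0] ∈ W := W.add_mem (hBW _ h) (W.smul_mem _ h)
    rw [show (!![l3, 0, 0; -l2, l2, 0; l2, -(l1 * l3 * l2⁻¹) - l2, l1]).mulVec ![(0:K),1,0]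
        + (-l2) • ![(0:K),1,0] = (-(l1*l3*l2⁻¹+l2)) • ![(0:K),0,1] by
      simp only [mulVec3, smul3, add3]
      exact vec3_ext (by ring) (by ring) (by ring)] at m2
    exact mem_of_smul_mem (neg_ne_zero.mpr hcc) m2
  have he1 : ![(1:K),0,0] ∈ W → W = ⊤ := fun h =>
    htop h (step_e1_e2 h (step_e1_e3 h)) (step_e1_e3 h)
  have he3 : ![(0:K),0,1] ∈ W → W = ⊤ := fun h => he1 (step_e3_e1 h)
  have he2 : ![(0:K),1,0] ∈ W → W = ⊤ := fun h => he3 (step_e2_e3 h)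
  have keyA : ∀ x y z : K,
      (!![l1, l1 * l3 * l2⁻¹ + l2, l2; 0, l2, l2; 0, 0, l3]).mulVec
          ((!![l1, l1 * l3 * l2⁻¹ + l2, l2; 0, l2, l2; 0, 0, l3]).mulVec ![x,y,z])
        + (-(l1+l2)) • (!![l1, l1 * l3 * l2⁻¹ + l2, l2; 0, l2, l2; 0, 0, l3]).mulVec ![x,y,z]
        + (l1*l2) • ![x,y,z]
      = z • ![l3*(l1+l2), l2*(l3-l1), (l3-l1)*(l3-l2)] := by
    intro x y z
    simp only [mulVec3, smul3, add3]
    exact vec3_ext (by linear_combination (l1*l3*z) * hinv) (by ring) (by ring)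
  have keyB : ∀ x y z : K,
      (!![l3, 0, 0; -l2, l2, 0; l2, -(l1 * l3 * l2⁻¹) - l2, l1]).mulVec
          ((!![l3, 0, 0; -l2, l2, 0; l2, -(l1 * l3 * l2⁻¹) - l2, l1]).mulVec ![x,y,z])
        + (-(l1+l2)) • (!![l3, 0, 0; -l2, l2, 0; l2, -(l1 * l3 * l2⁻¹) - l2, l1]).mulVec ![x,y,z]
        + (l1*l2) • ![x,y,z]
      = x • ![(l3-l1)*(l3-l2), l2*(l1-l3), l3*(l1+l2)] := by
    intro x y z
    simp only [mulVec3, smul3, add3]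
    exact vec3_ext (by ring) (by ring) (by linear_combination (l1*l3*x) * hinv)
  have hw3 : (![l3*(l1+l2), l2*(l3-l1), (l3-l1)*(l3-l2)] : Fin 3 → K) ∈ W → W = ⊤ := by
    intro h
    have m1 : (!![l3, 0, 0; -l2, l2, 0; l2, -(l1 * l3 * l2⁻¹) - l2, l1]).mulVec
          ((!![l3, 0, 0; -l2, l2, 0; l2, -(l1 * l3 * l2⁻¹) - l2, l1]).mulVec
            ![l3*(l1+l2), l2*(l3-l1), (l3-l1)*(l3-l2)])
        + (-(l2+l3)) • (!![l3, 0, 0; -l2, l2, 0; l2, -(l1 * l3 * l2⁻¹) - l2, l1]).mulVec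
            ![l3*(l1+l2), l2*(l3-l1), (l3-l1)*(l3-l2)]
        + (l2*l3) • ![l3*(l1+l2), l2*(l3-l1), (l3-l1)*(l3-l2)] ∈ W :=
      W.add_mem (W.add_mem (hBW _ (hBW _ h)) (W.smul_mem _ (hBW _ h))) (W.smul_mem _ h)
    rw [show (!![l3, 0, 0; -l2, l2, 0; l2, -(l1 * l3 * l2⁻¹) - l2, l1]).mulVec
          ((!![l3, 0, 0; -l2, l2, 0; l2, -(l1 * l3 * l2⁻¹) - l2, l1]).mulVec
            ![l3*(l1+l2), l2*(l3-l1), (l3-l1)*(l3-l2)])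
        + (-(l2+l3)) • (!![l3, 0, 0; -l2, l2, 0; l2, -(l1 * l3 * l2⁻¹) - l2, l1]).mulVec
            ![l3*(l1+l2), l2*(l3-l1), (l3-l1)*(l3-l2)]
        + (l2*l3) • ![l3*(l1+l2), l2*(l3-l1), (l3-l1)*(l3-l2)]
        = ((l1^2+l2*l3)*(l3^2+l1*l2)) • ![(0:K),0,1] by
      simp only [mulVec3, smul3, add3]
      exact vec3_ext (by ring) (by ring)
        (by linear_combination (l1*l3^3 + l1*l2*l3^2 - l1^2*l3^2 + l1^3*l3) * hinv)] at m1
    exact he3 (mem_of_smul_mem (mul_ne_zero hC1 hC3) m1)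
  have hq3 : (![(l3-l1)*(l3-l2), l2*(l1-l3), l3*(l1+l2)] : Fin 3 → K) ∈ W → W = ⊤ := by
    intro h
    have m1 : (!![l1, l1 * l3 * l2⁻¹ + l2, l2; 0, l2, l2; 0, 0, l3]).mulVec
          ((!![l1, l1 * l3 * l2⁻¹ + l2, l2; 0, l2, l2; 0, 0, l3]).mulVec
            ![(l3-l1)*(l3-l2), l2*(l1-l3), l3*(l1+l2)])
        + (-(l2+l3)) • (!![l1, l1 * l3 * l2⁻¹ + l2, l2; 0, l2, l2; 0, 0, l3]).mulVec
            ![(l3-l1)*(l3-l2), l2*(l1-l3), l3*(l1+l2)]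
        + (l2*l3) • ![(l3-l1)*(l3-l2), l2*(l1-l3), l3*(l1+l2)] ∈ W :=
      W.add_mem (W.add_mem (hAW _ (hAW _ h)) (W.smul_mem _ (hAW _ h))) (W.smul_mem _ h)
    rw [show (!![l1, l1 * l3 * l2⁻¹ + l2, l2; 0, l2, l2; 0, 0, l3]).mulVec
          ((!![l1, l1 * l3 * l2⁻¹ + l2, l2; 0, l2, l2; 0, 0, l3]).mulVec
            ![(l3-l1)*(l3-l2), l2*(l1-l3), l3*(l1+l2)])
        + (-(l2+l3)) • (!![l1, l1 * l3 * l2⁻¹ + l2, l2; 0, l2, l2; 0, 0, l3]).mulVec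
            ![(l3-l1)*(l3-l2), l2*(l1-l3), l3*(l1+l2)]
        + (l2*l3) • ![(l3-l1)*(l3-l2), l2*(l1-l3), l3*(l1+l2)]
        = ((l1^2+l2*l3)*(l3^2+l1*l2)) • ![(1:K),0,0] by
      simp only [mulVec3, smul3, add3]
      exact vec3_ext
        (by linear_combination (l1*l3^3 + l1*l2*l3^2 - l1^2*l3^2 + l1^3*l3) * hinv)
        (by ring) (by ring)] at m1
    exact he1 (mem_of_smul_mem (mul_ne_zero hC1 hC3) m1)
  obtain ⟨v, hvW, hv0⟩ := (Submodule.ne_bot_iff W).mp hbot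
  have hrep : v = ![v 0, v 1, v 2] := by funext i; fin_cases i <;> rfl
  by_cases hz : v 2 = 0
  · by_cases hx : v 0 = 0
    · have hy : v 1 ≠ 0 := by
        intro hy
        apply hv0
        funext i; fin_cases i <;> simp [hx, hy, hz]
      have hv2 : v = v 1 • ![(0:K),1,0] := by
        funext i; fin_cases i <;> simp [hx, hz]
      rw [hv2] at hvW
      exact he2 (mem_of_smul_mem hy hvW)
    · have m1 : (!![l3, 0, 0; -l2, l2, 0; l2, -(l1 * l3 * l2⁻¹) - l2, l1]).mulVec
            ((!![l3, 0, 0; -l2, l2, 0; l2, -(l1 * l3 * l2⁻¹) - l2, l1]).mulVec v)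
          + (-(l1+l2)) • (!![l3, 0, 0; -l2, l2, 0; l2, -(l1 * l3 * l2⁻¹) - l2, l1]).mulVec v
          + (l1*l2) • v ∈ W :=
        W.add_mem (W.add_mem (hBW _ (hBW _ hvW)) (W.smul_mem _ (hBW _ hvW))) (W.smul_mem _ hvW)
      rw [hrep, keyB] at m1
      exact hq3 (mem_of_smul_mem hx m1)
  · have m1 : (!![l1, l1 * l3 * l2⁻¹ + l2, l2; 0, l2, l2; 0, 0, l3]).mulVec
          ((!![l1, l1 * l3 * l2⁻¹ + l2, l2; 0, l2, l2; 0, 0, l3]).mulVec v)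
        + (-(l1+l2)) • (!![l1, l1 * l3 * l2⁻¹ + l2, l2; 0, l2, l2; 0, 0, l3]).mulVec v
        + (l1*l2) • v ∈ W :=
      W.add_mem (W.add_mem (hAW _ (hAW _ hvW)) (W.smul_mem _ (hAW _ hvW))) (W.smul_mem _ hvW)
    rw [hrep, keyA] at m1
    exact hw3 (mem_of_smul_mem hz m1)

end aux

theorem braid_dim3_irreducible_iff {K : Type*} [Field K] [IsAlgClosed K]
    (l1 l2 l3 : K) (h1 : l1 ≠ 0) (h2 : l2 ≠ 0) (h3 : l3 ≠ 0) :
    let A : Matrix (Fin 3) (Fin 3) K :=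
      !![l1, l1 * l3 * l2⁻¹ + l2, l2; 0, l2, l2; 0, 0, l3]
    let B : Matrix (Fin 3) (Fin 3) K :=
      !![l3, 0, 0; -l2, l2, 0; l2, -(l1 * l3 * l2⁻¹) - l2, l1]
    ((∀ W : Submodule K (Fin 3 → K),
        (∀ v ∈ W, A.mulVec v ∈ W) → (∀ v ∈ W, B.mulVec v ∈ W) → W = ⊥ ∨ W = ⊤) ↔
      (l1 ^ 2 + l2 * l3 ≠ 0 ∧ l2 ^ 2 + l1 * l3 ≠ 0 ∧ l3 ^ 2 + l1 * l2 ≠ 0)) := by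
  intro A B
  constructor
  · intro hirr
    refine ⟨?_, ?_, ?_⟩
    · intro hC
      by_cases hc : l2^2 + l1*l3 = 0
      · exact spanE2_case h2 hc hirr
      · exact kerf_case h2 hC hc hirr
    · intro hC
      exact spanE2_case h2 hC hirr
    · intro hC
      exact spanv_case h2 hC hirr
  · rintro ⟨hC1, hC2, hC3⟩ W hAW hBW
    exact braid_irred h1 h2 h3 hC1 hC2 hC3 W hAW hBW
end

section
/- Let λ₁,...,λ₄ be nonzero scalars and D a nonzero scalar with D² = λ₂λ₃/(λ₁λ₄). Define A = [[λ₁, (1+D^{-1}+D^{-2})λ₂, (1+D^{-1}+D^{-2})λ₃, λ₄], [0, λ₂, (1+D^{-1})λ₃, λ₄], [0, 0, λ₃, λ₄], [0, 0, 0, λ₄]] and B = [[λ₄, 0, 0, 0], [−λ₃, λ₃, 0, 0], [Dλ₂, −(D+1)λ₂, λ₂, 0], [−D³λ₁, (D³+D²+D)λ₁, −(D²+D+1)λ₁, λ₁]]. Then ABA = BAB. -/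
set_option maxHeartbeats 1000000 in
theorem braid_dim4 {K : Type*} [Field K] (l1 l2 l3 l4 D : K)
    (h1 : l1 ≠ 0) (h2 : l2 ≠ 0) (h3 : l3 ≠ 0) (h4 : l4 ≠ 0) (hD : D ≠ 0)
    (hD2 : D ^ 2 = l2 * l3 / (l1 * l4)) :
    let A : Matrix (Fin 4) (Fin 4) K :=
      !![l1, (1 + D⁻¹ + D⁻¹ ^ 2) * l2, (1 + D⁻¹ + D⁻¹ ^ 2) * l3, l4;
         0, l2, (1 + D⁻¹) * l3, l4;
         0, 0, l3, l4;
         0, 0, 0, l4]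
    let B : Matrix (Fin 4) (Fin 4) K :=
      !![l4, 0, 0, 0;
         -l3, l3, 0, 0;
         D * l2, -(D + 1) * l2, l2, 0;
         -(D ^ 3) * l1, (D ^ 3 + D ^ 2 + D) * l1, -(D ^ 2 + D + 1) * l1, l1]
    A * B * A = B * A * B := by
  intro A B
  have key : l1 * l4 * D ^ 2 = l2 * l3 := by
    field_simp at hD2; linear_combination hD2
  obtain ⟨e, he⟩ : ∃ e, D⁻¹ = e := ⟨D⁻¹, rfl⟩
  have hDe : D * e = 1 := by rw [← he]; exact mul_inv_cancel₀ hD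
  show A * B * A = B * A * B
  simp only [A, B]
  rw [he]
  clear_value A B
  clear A B he hD2
  ext i j
  fin_cases i <;> fin_cases j
  · simp [Matrix.mul_apply, Fin.sum_univ_four, Matrix.vecHead, Matrix.vecTail]
    try linear_combination ((-1) * l2 * l3 * l4 + (-1) * l2 * l3 * l4 * e + l1 * l4 ^ 2 + l1 * l4 ^ 2 * D * e + l1 * l2 * l3 + l1 * l2 * l3 * e + (-1) * l1 ^ 2 * l4 + (-1) * l1 ^ 2 * l4 * D * e) * hDe + ((-1) * l4 * e ^ 2 + l4 * D + l1 * e ^ 2 + (-1) * l1 * D) * key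
  · simp [Matrix.mul_apply, Fin.sum_univ_four, Matrix.vecHead, Matrix.vecTail]
    try linear_combination (l2 * l3 * l4 + l2 * l3 * l4 * e + l2 ^ 2 * l3 + 2 * l2 ^ 2 * l3 * e + 2 * l2 ^ 2 * l3 * e ^ 2 + l2 ^ 2 * l3 * e ^ 3 + l1 * l4 ^ 2 * D + (-1) * l1 * l2 * l4 + (-1) * l1 * l2 * l4 * e + (-1) * l1 * l2 * l4 * e ^ 2 + (-1) * l1 * l2 * l4 * D + (-1) * l1 * l2 * l4 * D * e + (-1) * l1 * l2 * l4 * D * e ^ 2 + (-1) * l1 * l2 * l4 * D * e ^ 3 + (-1) * l1 * l2 * l4 * D ^ 2 + (-1) * l1 * l2 * l4 * D ^ 2 * e) * hDe + ((-1) * l4 + (-1) * l4 * e + (-1) * l4 * D + l2 * e ^ 2 + l2 * e ^ 3 + l2 * e ^ 4) * key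
  · simp [Matrix.mul_apply, Fin.sum_univ_four, Matrix.vecHead, Matrix.vecTail]
    try linear_combination (l2 * l3 ^ 2 * e + l2 * l3 ^ 2 * e ^ 2 + l2 * l3 ^ 2 * e ^ 3 + (-1) * l1 * l4 ^ 2 + (-1) * l1 * l4 ^ 2 * D + (-1) * l1 * l4 ^ 2 * D * e + (-1) * l1 * l3 * l4 * e + (-1) * l1 * l3 * l4 * e ^ 2 + (-1) * l1 * l3 * l4 * D * e + (-1) * l1 * l3 * l4 * D * e ^ 2 + (-1) * l1 * l3 * l4 * D * e ^ 3 + (-1) * l1 * l3 * l4 * D ^ 2 * e) * hDe + (l4 + l4 * e + l4 * e ^ 2 + l3 * e ^ 2 + l3 * e ^ 3 + l3 * e ^ 4) * key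
  · simp [Matrix.mul_apply, Fin.sum_univ_four, Matrix.vecHead, Matrix.vecTail]
    try ring
  · simp [Matrix.mul_apply, Fin.sum_univ_four, Matrix.vecHead, Matrix.vecTail]
    try linear_combination (l2 * l3 ^ 2 * e + (-1) * l1 * l3 * l4 + (-1) * l1 * l3 * l4 * D * e + l1 * l2 * l3) * hDe + (l3 * e ^ 2 + (-1) * l1 * D) * key
  · simp [Matrix.mul_apply, Fin.sum_univ_four, Matrix.vecHead, Matrix.vecTail]
    try linear_combination ((-1) * l2 * l3 ^ 2 * e + l2 ^ 2 * l3 + 2 * l2 ^ 2 * l3 * e + l2 ^ 2 * l3 * e ^ 2 + (-1) * l1 * l2 * l4 * D + (-1) * l1 * l2 * l4 * D ^ 2 + (-1) * l1 * l2 * l4 * D ^ 2 * e) * hDe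
  · simp [Matrix.mul_apply, Fin.sum_univ_four, Matrix.vecHead, Matrix.vecTail]
    try linear_combination (l2 * l3 ^ 2 * e + l2 * l3 ^ 2 * e ^ 2 + l1 * l3 * l4 + (-1) * l1 * l3 * l4 * D ^ 2 * e) * hDe
  · simp [Matrix.mul_apply, Fin.sum_univ_four, Matrix.vecHead, Matrix.vecTail]
    try ring
  · simp [Matrix.mul_apply, Fin.sum_univ_four, Matrix.vecHead, Matrix.vecTail]
    try linear_combination (l2 ^ 2 * l3 + l2 ^ 2 * l3 * e + (-1) * l2 ^ 2 * l3 * D * e + l1 * l2 * l4 * D) * hDe + ((-1) * l2 * e + (-1) * l1 * D) * key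
  · simp [Matrix.mul_apply, Fin.sum_univ_four, Matrix.vecHead, Matrix.vecTail]
    try linear_combination (l2 ^ 2 * l3 * e + l2 ^ 2 * l3 * D * e + (-1) * l1 * l2 * l4 * D + (-1) * l1 * l2 * l4 * D ^ 2 + (-1) * l1 * l2 * l4 * D ^ 2 * e) * hDe
  · simp [Matrix.mul_apply, Fin.sum_univ_four, Matrix.vecHead, Matrix.vecTail]
    try linear_combination (l2 * l3 ^ 2 * e + (-1) * l2 ^ 2 * l3 * e + l1 * l3 * l4 + (-1) * l1 * l3 * l4 * D ^ 2 * e) * hDe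
  · simp [Matrix.mul_apply, Fin.sum_univ_four, Matrix.vecHead, Matrix.vecTail]
    try ring
  · simp [Matrix.mul_apply, Fin.sum_univ_four, Matrix.vecHead, Matrix.vecTail]
    try linear_combination ((-2) * l1 * l2 * l3 * D + (-1) * l1 * l2 * l3 * D ^ 2 + (-1) * l1 * l2 * l3 * D ^ 2 * e + l1 * l2 * l3 * D ^ 3 * e) * hDe
  · simp [Matrix.mul_apply, Fin.sum_univ_four, Matrix.vecHead, Matrix.vecTail]
    try linear_combination ((-1) * l1 * l2 * l4 * D + (-1) * l1 * l2 * l4 * D ^ 2 + (-1) * l1 * l2 * l4 * D ^ 2 * e + l1 * l2 * l3 + 2 * l1 * l2 * l3 * D + l1 * l2 * l3 * D ^ 2 + (-1) * l1 * l2 * l3 * D ^ 3 * e) * hDe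
  · simp [Matrix.mul_apply, Fin.sum_univ_four, Matrix.vecHead, Matrix.vecTail]
    try linear_combination (l1 * l3 * l4 + (-1) * l1 * l3 * l4 * D ^ 2 * e + (-1) * l1 * l2 * l3 + l1 * l2 * l3 * D ^ 2 * e) * hDe
  · simp [Matrix.mul_apply, Fin.sum_univ_four, Matrix.vecHead, Matrix.vecTail]
    try ring
end

section
/- Let V be a finite-dimensional vector space, A an endomorphism, λ an eigenvalue of A, and b ∈ V. Then the intersection of the eigenspace of A for λ with the A-cyclic subspace span{A^i b : i ≥ 0} has dimension at most 1. -/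
/-!
The polynomials `p` with `p(A) b` in the `λ`-eigenspace form an ideal of `K[X]`, because `q(A)`
acts on that eigenspace as the scalar `q(λ)`. If `g` generates this ideal, every vector of the
intersection is `(q g)(A) b = q(λ) • g(A) b`, so the intersection lies on the line through
`g(A) b`.
-/

open Polynomial Module

namespace Module.End

section CommSemiring

variable {R V : Type*} [CommSemiring R] [AddCommMonoid V] [Module R V]

theorem mem_span_range_pow_apply_iff {A : End R V} {b w : V} :
    w ∈ Submodule.span R (Set.range fun i : ℕ => (A ^ i) b) ↔ ∃ p : R[X], aeval A p b = w := by
  have hrange : Submodule.span R (Set.range fun i : ℕ => (A ^ i) b) =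
      LinearMap.range ((LinearMap.applyₗ b).comp (aeval A).toLinearMap) := by
    rw [LinearMap.range_eq_map, ← (basisMonomials R).span_eq, Submodule.map_span,
      ← Set.range_comp]
    congr
    ext i
    simp
  rw [hrange]
  rfl

end CommSemiring

section CommRing

variable {R V : Type*} [CommRing R] [AddCommGroup V] [Module R V]

def eigenspaceIdeal (A : End R V) (μ : R) (b : V) : Ideal R[X] where
  carrier := {p | aeval A p b ∈ A.eigenspace μ}
  add_mem' {p q} (hp : aeval A p b ∈ A.eigenspace μ) (hq : aeval A q b ∈ A.eigenspace μ) := by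
    change aeval A (p + q) b ∈ A.eigenspace μ
    simpa only [map_add, LinearMap.add_apply] using add_mem hp hq
  zero_mem' := by simp
  smul_mem' q p (hp : aeval A p b ∈ A.eigenspace μ) := by
    change aeval A (q * p) b ∈ A.eigenspace μ
    rw [map_mul, mul_apply, aeval_apply_of_mem_apply_eq_smul (mem_eigenspace_iff.mp hp)]
    exact Submodule.smul_mem _ _ hp

theorem mem_eigenspaceIdeal {A : End R V} {μ : R} {b : V} {p : R[X]} :
    p ∈ A.eigenspaceIdeal μ b ↔ aeval A p b ∈ A.eigenspace μ := Iff.rfl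

end CommRing

theorem exists_eigenspace_inf_span_range_pow_apply_le_span_singleton {K V : Type*} [Field K]
    [AddCommGroup V] [Module K V] (A : End K V) (μ : K) (b : V) :
    ∃ v, A.eigenspace μ ⊓ Submodule.span K (Set.range fun i : ℕ => (A ^ i) b) ≤ K ∙ v := by
  set I := A.eigenspaceIdeal μ b
  set g := Submodule.IsPrincipal.generator I
  have hg : aeval A g b ∈ A.eigenspace μ :=
    mem_eigenspaceIdeal.mp (Submodule.IsPrincipal.generator_mem I)
  refine ⟨aeval A g b, fun w ⟨hwE, hwS⟩ => ?_⟩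
  obtain ⟨p, rfl⟩ := mem_span_range_pow_apply_iff.mp hwS
  obtain ⟨q, rfl⟩ := (Submodule.IsPrincipal.mem_iff_eq_smul_generator I).mp
    (mem_eigenspaceIdeal.mpr hwE)
  rw [smul_eq_mul, map_mul, mul_apply,
    aeval_apply_of_mem_apply_eq_smul (mem_eigenspace_iff.mp hg)]
  exact Submodule.smul_mem _ _ (Submodule.mem_span_singleton_self _)

end Module.End

theorem eigenspace_cyclic_inter_dim_general {K : Type*} [Field K]
    (V : Type*) [AddCommGroup V] [Module K V]
    (A : V →ₗ[K] V) (lam : K) (b : V) :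
    Module.finrank K
        ↥(Module.End.eigenspace A lam ⊓
            Submodule.span K (Set.range fun i : ℕ => (A ^ i) b)) ≤ 1 := by
  obtain ⟨v, hle⟩ :=
    Module.End.exists_eigenspace_inf_span_range_pow_apply_le_span_singleton A lam b
  calc _ ≤ finrank K (K ∙ v) := Submodule.finrank_mono hle
    _ ≤ 1 := by simpa using finrank_span_le_card ({v} : Set V)

theorem eigenspace_cyclic_inter_dim {K : Type*} [Field K]
    (V : Type*) [AddCommGroup V] [Module K V] [FiniteDimensional K V]
    (A : V →ₗ[K] V) (lam : K) (hlam : Module.End.HasEigenvalue A lam) (b : V) :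
    Module.finrank K
        ↥(Module.End.eigenspace A lam ⊓
            Submodule.span K (Set.range fun i : ℕ => (A ^ i) b)) ≤ 1 :=
  eigenspace_cyclic_inter_dim_general V A lam b
end

section
/- Let A, B ∈ GL(d, K) satisfy ABA = BAB and suppose (AB)³ = δ·I for a scalar δ. If W ⊆ K^d is a subspace of dimension r invariant under both A and B, then (λ₁···λ_d)^{6r} = (μ₁···μ_r)^{6d}, where λ₁,...,λ_d are the eigenvalues of A on K^d (with multiplicity) and μ₁,...,μ_r are the eigenvalues of A restricted to W. -/
open Module

/-!
Taking determinants in `a b a = b a b` gives `det a ^ 2 = det a * det b` once `det b ≠ 0`, so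
`det a ^ 6 = (det a * det b) ^ 3 = det ((a b) ^ 3) = δ ^ dim`. The restrictions of `A` and `B` to
`W` satisfy the same two relations, hence `det (A|W) ^ 6 = δ ^ r`, and both sides of the claim
equal `δ ^ (d r)`.
-/

theorem pow_six_eq_mul_pow_three_of_braid {M : Type*} [CommMonoidWithZero M] [IsCancelMulZero M]
    {a b : M} (h : a * b * a = b * a * b) (hb : b ≠ 0) : a ^ 6 = (a * b) ^ 3 := by
  have hsq : a * a = a * b := mul_left_cancel₀ hb <| by
    rw [mul_left_comm, ← mul_assoc, h, mul_assoc]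
  rw [← hsq, ← sq, ← pow_mul]

namespace LinearMap

variable {R V : Type*} [CommRing R] [AddCommGroup V] [Module R V]

theorem det_pow_six_of_braid [IsDomain R] [Free R V] [Module.Finite R V] {f g : End R V}
    (hbraid : f * g * f = g * f * g) {δ : R} (hcentral : (f * g) ^ 3 = δ • 1)
    (hg : LinearMap.det g ≠ 0) : LinearMap.det f ^ 6 = δ ^ finrank R V := by
  have hdet := congr(LinearMap.det $hbraid)
  simp only [map_mul] at hdet
  rw [pow_six_eq_mul_pow_three_of_braid hdet hg, ← map_mul, ← map_pow, hcentral, det_smul,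
    map_one, mul_one]

variable {f g : End R V} {p : Submodule R V}

theorem restrict_braid (hf : ∀ x ∈ p, f x ∈ p) (hg : ∀ x ∈ p, g x ∈ p)
    (h : f * g * f = g * f * g) :
    f.restrict hf * g.restrict hg * f.restrict hf = g.restrict hg * f.restrict hf * g.restrict hg :=
  ext fun x => Subtype.ext congr($h x)

theorem restrict_mul_pow_eq_smul_one (hf : ∀ x ∈ p, f x ∈ p) (hg : ∀ x ∈ p, g x ∈ p) {n : ℕ}
    {δ : R} (h : (f * g) ^ n = δ • 1) : (f.restrict hf * g.restrict hg) ^ n = δ • 1 := by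
  change ((f * g).restrict fun x hx => hf _ (hg x hx)) ^ n = _
  rw [Module.End.pow_restrict]
  exact ext fun x => Subtype.ext congr($h x)

end LinearMap

theorem LinearMap.det_restrict_ne_zero {K V : Type*} [Field K] [AddCommGroup V] [Module K V]
    [FiniteDimensional K V] {f : End K V} {p : Submodule K V} (hf : ∀ x ∈ p, f x ∈ p)
    (h : LinearMap.det f ≠ 0) : LinearMap.det (f.restrict hf) ≠ 0 := by
  rw [Ne, det_eq_zero_iff_ker_ne_bot, not_not, ker_eq_bot] at h ⊢
  exact fun x y hxy => Subtype.ext (h congr($hxy))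

theorem braid_submodule_det_constraint_general {K : Type*} [Field K] {d : ℕ}
    (A B : Matrix (Fin d) (Fin d) K) (hB : IsUnit B)
    (hbraid : A * B * A = B * A * B) (δ : K)
    (hcentral : (A * B) ^ 3 = δ • (1 : Matrix (Fin d) (Fin d) K))
    (W : Submodule K (Fin d → K)) (r : ℕ) (hr : Module.finrank K ↥W = r)
    (hWA : ∀ x ∈ W, A.mulVecLin x ∈ W) (hWB : ∀ x ∈ W, B.mulVecLin x ∈ W) :
    A.det ^ (6 * r) = (LinearMap.det (A.mulVecLin.restrict hWA)) ^ (6 * d) := by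
  let φ := Matrix.toLinAlgEquiv' (R := K) (n := Fin d)
  have hbraid' : φ A * φ B * φ A = φ B * φ A * φ B := by
    simpa only [map_mul] using congr(φ $hbraid)
  have hcentral' : (φ A * φ B) ^ 3 = δ • 1 := by
    simpa only [map_mul, map_pow, map_smul, map_one] using congr(φ $hcentral)
  have hdet (M : Matrix (Fin d) (Fin d) K) : LinearMap.det (φ M) = M.det := LinearMap.det_toLin' M
  have hdetB : LinearMap.det (φ B) ≠ 0 :=
    hdet B ▸ ((Matrix.isUnit_iff_isUnit_det B).mp hB).ne_zero
  have hV : A.det ^ 6 = δ ^ d := by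
    simpa only [hdet, finrank_fin_fun] using
      LinearMap.det_pow_six_of_braid hbraid' hcentral' hdetB
  have hW : LinearMap.det (A.mulVecLin.restrict hWA) ^ 6 = δ ^ r := hr ▸
    LinearMap.det_pow_six_of_braid (LinearMap.restrict_braid hWA hWB hbraid')
      (LinearMap.restrict_mul_pow_eq_smul_one hWA hWB hcentral')
      (LinearMap.det_restrict_ne_zero hWB hdetB)
  rw [pow_mul, hV, pow_mul, hW, ← pow_mul, ← pow_mul, mul_comm]

theorem braid_submodule_det_constraint {K : Type*} [Field K] [IsAlgClosed K] {d : ℕ}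
    (A B : Matrix (Fin d) (Fin d) K) (hA : IsUnit A) (hB : IsUnit B)
    (hbraid : A * B * A = B * A * B) (δ : K)
    (hcentral : (A * B) ^ 3 = δ • (1 : Matrix (Fin d) (Fin d) K))
    (W : Submodule K (Fin d → K)) (r : ℕ) (hr : Module.finrank K ↥W = r)
    (hWA : ∀ x ∈ W, A.mulVecLin x ∈ W) (hWB : ∀ x ∈ W, B.mulVecLin x ∈ W) :
    A.det ^ (6 * r) = (LinearMap.det (A.mulVecLin.restrict hWA)) ^ (6 * d) :=
  braid_submodule_det_constraint_general A B hB hbraid δ hcentral W r hr hWA hWB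
end

section
/- Let d ≥ 1 and let λ₀, λ₁, ..., λ_d be nonzero scalars satisfying λ_i·λ_{d−i} = c for a fixed constant c and all i. Define (d+1)×(d+1) matrices A_{ij} = C(d−i, d−j)·λ_j and B_{ij} = (−1)^{i+j}·C(i, j)·λ_{d−i} (indices from 0 to d, C the binomial coefficient). Then ABA = BAB. -/
open Polynomial Finset

lemma braid_master {R : Type*} [CommRing R] (n i j : ℕ) :
    ∑ t ∈ range (n + 1), (-1 : R) ^ t * (n.choose t : R) * ((i + t).choose j : R)
      = if n ≤ j then (-1 : R) ^ n * (i.choose (j - n) : R) else 0 := by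
  have hpoly : (∑ t ∈ range (n + 1),
        C ((-1 : R) ^ t * (n.choose t : R)) * (1 + X) ^ (i + t))
      = (-X : R[X]) ^ n * (1 + X) ^ i := by
    have h := add_pow (-(1 + X : R[X])) 1 n
    have h2 : (-(1 + X : R[X]) + 1) = -X := by ring
    rw [h2] at h
    rw [h, Finset.sum_mul]
    refine Finset.sum_congr rfl fun t _ => ?_
    have hC : (C ((-1 : R) ^ t * (n.choose t : R)))
        = (-1 : R[X]) ^ t * (n.choose t : R[X]) := by
      simp [map_mul, map_pow]
    rw [hC, pow_add,
      show (-(1 + X) : R[X]) ^ t = (-1) ^ t * (1 + X) ^ t from by rw [neg_pow],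
      one_pow]
    ring
  have hcoeff : ∑ t ∈ range (n + 1), (-1 : R) ^ t * (n.choose t : R) * ((i + t).choose j : R)
      = ((-X : R[X]) ^ n * (1 + X) ^ i).coeff j := by
    rw [← hpoly, Polynomial.finset_sum_coeff]
    refine Finset.sum_congr rfl fun t _ => ?_
    rw [coeff_C_mul, coeff_one_add_X_pow, mul_assoc]
  rw [hcoeff,
    show ((-X : R[X])) ^ n = C ((-1 : R) ^ n) * X ^ n from by
      rw [neg_pow, map_pow, map_neg, map_one],
    mul_assoc, coeff_C_mul, coeff_X_pow_mul']
  split_ifs with h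
  · rw [coeff_one_add_X_pow]
  · rw [mul_zero]

lemma braid_orth {R : Type*} [CommRing R] (d n r : ℕ) (hn : n ≤ d) :
    ∑ m ∈ range (d + 1), (-1 : R) ^ m * (n.choose m : R) * (m.choose r : R)
      = if n = r then (-1 : R) ^ n else 0 := by
  have hsub : range (n + 1) ⊆ range (d + 1) := by
    intro x hx; simp only [mem_range] at *; omega
  rw [← Finset.sum_subset hsub (by
    intro x _ hx
    simp only [mem_range, not_lt] at hx
    rw [Nat.choose_eq_zero_of_lt (by omega), Nat.cast_zero, mul_zero, zero_mul])]
  have h := braid_master (R := R) n 0 r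
  simp only [zero_add] at h
  rw [h]
  split_ifs with h1 h2 h2
  · rw [show r - n = 0 by omega, Nat.choose_zero_right, Nat.cast_one, mul_one]
  · rw [Nat.choose_eq_zero_of_lt (by omega), Nat.cast_zero, mul_zero]
  · omega
  · rfl

lemma braid_T1 {R : Type*} [CommRing R] (d i j : ℕ) (hi : i ≤ d) (hj : j ≤ d) :
    ∑ k ∈ range (d + 1), (-1 : R) ^ (k + j) * ((d - i).choose (d - k) : R) * (k.choose j : R)
      = (-1 : R) ^ (d + j) * (i.choose (d - j) : R) := by
  have hsub : Finset.Ico i (d + 1) ⊆ range (d + 1) := by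
    intro x hx; simp only [Finset.mem_Ico, mem_range] at *; omega
  rw [← Finset.sum_subset hsub (by
    intro x hx hx2
    simp only [Finset.mem_Ico, mem_range, not_and, not_le, not_lt] at *
    rw [Nat.choose_eq_zero_of_lt (by omega), Nat.cast_zero, mul_zero, zero_mul])]
  rw [Finset.sum_Ico_eq_sum_range]
  rw [show d + 1 - i = (d - i) + 1 by omega]
  have key : ∀ t ∈ range ((d - i) + 1),
      (-1 : R) ^ (i + t + j) * ((d - i).choose (d - (i + t)) : R) * ((i + t).choose j : R)
      = (-1 : R) ^ (i + j) * ((-1 : R) ^ t * ((d - i).choose t : R) * ((i + t).choose j : R)) := by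
    intro t ht
    simp only [mem_range] at ht
    rw [show d - (i + t) = (d - i) - t by omega, Nat.choose_symm (by omega),
      show i + t + j = (i + j) + t by omega, pow_add]
    ring
  rw [Finset.sum_congr rfl key, ← Finset.mul_sum, braid_master]
  split_ifs with h
  · rw [show j - (d - i) = i - (d - j) by omega, Nat.choose_symm (by omega),
      ← mul_assoc, ← pow_add, show i + j + (d - i) = d + j by omega]
  · rw [Nat.choose_eq_zero_of_lt (by omega), Nat.cast_zero, mul_zero, mul_zero]

lemma braid_T2 {R : Type*} [CommRing R] (d i j : ℕ) (hi : i ≤ d) (hj : j ≤ d) :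
    ∑ k ∈ range (d + 1), (-1 : R) ^ (i + k) * (i.choose k : R) * ((d - k).choose (d - j) : R)
      = (-1 : R) ^ i * ((d - i).choose j : R) := by
  have hsub : range (i + 1) ⊆ range (d + 1) := by
    intro x hx; simp only [mem_range] at *; omega
  rw [← Finset.sum_subset hsub (by
    intro x _ hx
    simp only [mem_range, not_lt] at hx
    rw [Nat.choose_eq_zero_of_lt (by omega), Nat.cast_zero, mul_zero, zero_mul])]
  rw [← Finset.sum_range_reflect]
  have key : ∀ t ∈ range (i + 1),
      (-1 : R) ^ (i + (i + 1 - 1 - t)) * (i.choose (i + 1 - 1 - t) : R)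
        * ((d - (i + 1 - 1 - t)).choose (d - j) : R)
      = (-1 : R) ^ t * (i.choose t : R) * (((d - i) + t).choose (d - j) : R) := by
    intro t ht
    simp only [mem_range] at ht
    rw [show i + 1 - 1 - t = i - t by omega, Nat.choose_symm (by omega),
      show d - (i - t) = (d - i) + t by omega,
      show i + (i - t) = t + 2 * (i - t) by omega, pow_add, pow_mul,
      neg_one_sq, one_pow, mul_one]
  rw [Finset.sum_congr rfl key, braid_master]
  split_ifs with h
  · rw [show d - j - i = (d - i) - j by omega, Nat.choose_symm (by omega)]
  · rw [Nat.choose_eq_zero_of_lt (by omega), Nat.cast_zero, mul_zero]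

theorem braid_binomial_family {K : Type*} [Field K] {d : ℕ} (hd : 1 ≤ d)
    (c : K) (hc : c ≠ 0) (lam : Fin (d + 1) → K) (hlam : ∀ i, lam i ≠ 0)
    (hprod : ∀ i : Fin (d + 1), lam i * lam i.rev = c)
    (A B : Matrix (Fin (d + 1)) (Fin (d + 1)) K)
    (hAdef : ∀ i j : Fin (d + 1),
      A i j = (Nat.choose (d - (i : ℕ)) (d - (j : ℕ)) : K) * lam j)
    (hBdef : ∀ i j : Fin (d + 1),
      B i j = (-1 : K) ^ ((i : ℕ) + (j : ℕ)) * (Nat.choose (i : ℕ) (j : ℕ) : K) * lam i.rev) :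
    A * B * A = B * A * B := by
  have hiLt : ∀ i : Fin (d + 1), (i : ℕ) ≤ d := fun i => Nat.lt_succ_iff.mp i.isLt
  -- closed form for A * B
  have hAB : ∀ i j : Fin (d + 1), (A * B) i j
      = (-1 : K) ^ (d + (j : ℕ)) * (((i : ℕ)).choose (d - (j : ℕ)) : K) * c := by
    intro i j
    rw [Matrix.mul_apply]
    have h1 : ∀ k : Fin (d + 1), A i k * B k j
        = (-1 : K) ^ ((k : ℕ) + (j : ℕ)) * (((d - (i : ℕ)).choose (d - (k : ℕ))) : K)
          * (((k : ℕ).choose (j : ℕ)) : K) * c := by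
      intro k
      rw [hAdef, hBdef, ← hprod k]
      ring
    rw [Finset.sum_congr rfl fun k _ => h1 k,
      Fin.sum_univ_eq_sum_range (fun k => (-1 : K) ^ (k + (j : ℕ))
        * (((d - (i : ℕ)).choose (d - k)) : K) * ((k.choose (j : ℕ)) : K) * c) (d + 1),
      ← Finset.sum_mul, braid_T1 d (i : ℕ) (j : ℕ) (hiLt i) (hiLt j)]
  -- closed form for B * A
  have hBA : ∀ i j : Fin (d + 1), (B * A) i j
      = (-1 : K) ^ (i : ℕ) * (((d - (i : ℕ)).choose (j : ℕ)) : K) * (lam i.rev * lam j) := by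
    intro i j
    rw [Matrix.mul_apply]
    have h1 : ∀ k : Fin (d + 1), B i k * A k j
        = (-1 : K) ^ ((i : ℕ) + (k : ℕ)) * (((i : ℕ).choose (k : ℕ)) : K)
          * (((d - (k : ℕ)).choose (d - (j : ℕ))) : K) * (lam i.rev * lam j) := by
      intro k
      rw [hAdef, hBdef]
      ring
    rw [Finset.sum_congr rfl fun k _ => h1 k,
      Fin.sum_univ_eq_sum_range (fun k => (-1 : K) ^ ((i : ℕ) + k)
        * (((i : ℕ).choose k) : K) * (((d - k).choose (d - (j : ℕ))) : K)
        * (lam i.rev * lam j)) (d + 1),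
      ← Finset.sum_mul, braid_T2 d (i : ℕ) (j : ℕ) (hiLt i) (hiLt j)]
  -- closed form for A * B * A
  have hABA : ∀ i j : Fin (d + 1), (A * B * A) i j
      = if (i : ℕ) + (j : ℕ) = d then (-1 : K) ^ (i : ℕ) * (c * lam j) else 0 := by
    intro i j
    rw [Matrix.mul_apply]
    have h1 : ∀ k : Fin (d + 1), (A * B) i k * A k j
        = (-1 : K) ^ (d + (k : ℕ)) * (((i : ℕ).choose (d - (k : ℕ))) : K)
          * (((d - (k : ℕ)).choose (d - (j : ℕ))) : K) * (c * lam j) := by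
      intro k
      rw [hAB, hAdef]
      ring
    rw [Finset.sum_congr rfl fun k _ => h1 k,
      Fin.sum_univ_eq_sum_range (fun k => (-1 : K) ^ (d + k)
        * (((i : ℕ).choose (d - k)) : K) * (((d - k).choose (d - (j : ℕ))) : K)
        * (c * lam j)) (d + 1),
      ← Finset.sum_mul]
    have hS : ∑ k ∈ Finset.range (d + 1), (-1 : K) ^ (d + k)
        * (((i : ℕ).choose (d - k)) : K) * (((d - k).choose (d - (j : ℕ))) : K)
        = if (i : ℕ) = d - (j : ℕ) then (-1 : K) ^ (i : ℕ) else 0 := by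
      rw [← Finset.sum_range_reflect]
      have key : ∀ t ∈ Finset.range (d + 1),
          (-1 : K) ^ (d + (d + 1 - 1 - t)) * (((i : ℕ).choose (d - (d + 1 - 1 - t))) : K)
            * (((d - (d + 1 - 1 - t)).choose (d - (j : ℕ))) : K)
          = (-1 : K) ^ t * (((i : ℕ).choose t) : K) * ((t.choose (d - (j : ℕ))) : K) := by
        intro t ht
        simp only [Finset.mem_range] at ht
        rw [show d + 1 - 1 - t = d - t by omega, show d - (d - t) = t by omega,
          show d + (d - t) = t + 2 * (d - t) by omega, pow_add, pow_mul,
          neg_one_sq, one_pow, mul_one]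
      rw [Finset.sum_congr rfl key, braid_orth d (i : ℕ) (d - (j : ℕ)) (hiLt i)]
    rw [hS]
    by_cases h : (i : ℕ) + (j : ℕ) = d
    · rw [if_pos (by omega), if_pos h]
    · rw [if_neg (by omega), if_neg h, zero_mul]
  -- closed form for B * A * B
  have hBAB : ∀ i j : Fin (d + 1), (B * A * B) i j
      = if (i : ℕ) + (j : ℕ) = d then (-1 : K) ^ (i : ℕ) * (c * lam j) else 0 := by
    intro i j
    rw [Matrix.mul_apply]
    have h1 : ∀ k : Fin (d + 1), (B * A) i k * B k j
        = (-1 : K) ^ (k : ℕ) * (((d - (i : ℕ)).choose (k : ℕ)) : K)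
          * (((k : ℕ).choose (j : ℕ)) : K)
          * ((-1 : K) ^ ((i : ℕ) + (j : ℕ)) * (lam i.rev * c)) := by
      intro k
      rw [hBA, hBdef, ← hprod k]
      ring
    rw [Finset.sum_congr rfl fun k _ => h1 k,
      Fin.sum_univ_eq_sum_range (fun k => (-1 : K) ^ k
        * (((d - (i : ℕ)).choose k) : K) * ((k.choose (j : ℕ)) : K)
        * ((-1 : K) ^ ((i : ℕ) + (j : ℕ)) * (lam i.rev * c))) (d + 1),
      ← Finset.sum_mul, braid_orth d (d - (i : ℕ)) (j : ℕ) (Nat.sub_le d (i : ℕ))]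
    by_cases h : (i : ℕ) + (j : ℕ) = d
    · rw [if_pos (by omega), if_pos h]
      have hrev : i.rev = j := by
        apply Fin.ext
        rw [Fin.val_rev]
        omega
      rw [hrev, ← mul_assoc, ← pow_add,
        show d - (i : ℕ) + ((i : ℕ) + (j : ℕ)) = (i : ℕ) + 2 * (d - (i : ℕ)) by omega,
        pow_add, pow_mul, neg_one_sq, one_pow, mul_one]
      ring
    · rw [if_neg (by omega), if_neg h, zero_mul]
  ext i j
  rw [hABA, hBAB]
end
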